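/- For n = 1, 2 let (λ⁽ⁿ⁾, S⁽ⁿ⁾) be admissible pairs and let X⁽ⁿ⁾ be the solution of the graph wave equation Ẍ⁽ⁿ⁾ − Δ X⁽ⁿ⁾ = λ⁽ⁿ⁾ S⁽ⁿ⁾ with the same initial data X⁽ⁿ⁾(0) = a, Ẋ⁽ⁿ⁾(0) = b. If {k₁, …, k_ℓ} is a strategic set of nodes and x_k⁽¹⁾(t) = x_k⁽²⁾(t) for all t ∈ (0, T) and all k ∈ {k₁, …, k_ℓ}, then X⁽¹⁾(T) = X⁽²⁾(T). (Theorem 4.1) -/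

import Mathlib

open Matrix Set MeasureTheory

/-!
Let `Y = X₁ - X₂` and let `c < T` be a time after which both sources vanish. On `(c, T)` both
solutions are classical solutions of the homogeneous equation, so `Y'' = ΔY` there. If `Y_k ≡ 0`
on `(c, T)`, differentiating twice shows `(ΔY)_k ≡ 0`, and inductively `(Δʲ Y)_k ≡ 0` for all `j`.
Expanding in the eigenbasis, `(Δʲ Y)_k = ∑ₘ (-ωₘ²)ʲ vᵐ_k (Y ⬝ vᵐ)`; the eigenvalues are distinct,
so the Vandermonde matrix is invertible and `vᵐ_k (Y ⬝ vᵐ) = 0` for every `m`. Since the nodes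
are strategic, every coefficient `Y ⬝ vᵐ` vanishes, so `Y ≡ 0` on `(c, T)` and, by continuity,
`Y(T) = 0`.
-/

/-- `(λ, S)` is an admissible source pair on `(0,T)`: `λ ∈ L²(0,T)` vanishes a.e. on some
final interval `(T⁰, T)`, and `S` is a standard basis vector of `ℝ^N`. -/
def AdmissiblePair (N : ℕ) (T : ℝ) (lam : ℝ → ℝ) (S : Fin N → ℝ) : Prop :=
  MemLp lam 2 (volume.restrict (Ioo (0:ℝ) T)) ∧
  (∃ T0 ∈ Ioo (0:ℝ) T, ∀ᵐ t ∂(volume.restrict (Ioo T0 T)), lam t = 0) ∧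
  ∃ s : Fin N, S = Pi.single s 1

/-- `X` solves the graph wave equation `Ẍ − ΔX = λ S`, `X(0) = a`, `Ẋ(0) = b` on `[0,T]`,
in the Volterra integral form. -/
def IsWaveSolution {N : ℕ} (Δ : Matrix (Fin N) (Fin N) ℝ) (T : ℝ) (lam : ℝ → ℝ)
    (S a b : Fin N → ℝ) (X : ℝ → Fin N → ℝ) : Prop :=
  ContinuousOn X (Icc 0 T) ∧
  ∀ t ∈ Icc (0:ℝ) T, X t = a + t • b + ∫ s in (0:ℝ)..t, (t - s) • (Δ.mulVec (X s) + lam s • S)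

section Volterra

variable {E : Type*} [NormedAddCommGroup E] [NormedSpace ℝ E]

theorem integral_sub_smul_add_adjacent_intervals {F : ℝ → E} {a c t : ℝ}
    (hac : IntervalIntegrable F volume a c) (hct : IntervalIntegrable F volume c t) :
    ∫ s in a..t, (t - s) • F s =
      (∫ s in a..c, (c - s) • F s) + (t - c) • (∫ s in a..c, F s) +
        ∫ s in c..t, (t - s) • F s := by
  have hsmul : ∀ r {x y}, IntervalIntegrable F volume x y →
      IntervalIntegrable (fun s => (r - s) • F s) volume x y := fun r _ _ h =>
    h.continuousOn_smul (continuous_const.sub continuous_id).continuousOn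
  have hcongr : ∫ s in a..c, (t - s) • F s = ∫ s in a..c, ((c - s) • F s + (t - c) • F s) :=
    intervalIntegral.integral_congr fun s _ => by simp only [← add_smul, sub_add_sub_cancel']
  rw [← intervalIntegral.integral_add_adjacent_intervals (hsmul t hac) (hsmul t hct), hcongr,
    intervalIntegral.integral_add (hsmul c hac)
      (hac.continuousOn_smul (continuousOn_const (c := t - c))), intervalIntegral.integral_smul]

variable [CompleteSpace E]

theorem hasDerivAt_intervalIntegral_of_continuousOn {H : ℝ → E} {c T t : ℝ}
    (hH : ContinuousOn H (Icc c T)) (ht : t ∈ Ioo c T) :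
    HasDerivAt (fun r => ∫ s in c..r, H s) (H t) t :=
  intervalIntegral.integral_hasDerivAt_right
    ((hH.mono (Icc_subset_Icc_right ht.2.le)).intervalIntegrable_of_Icc ht.1.le)
    ((hH.mono Ioo_subset_Icc_self).stronglyMeasurableAtFilter isOpen_Ioo t ht)
    (hH.continuousAt (Icc_mem_nhds ht.1 ht.2))

theorem hasDerivAt_intervalIntegral_sub_smul {H : ℝ → E} {c T t : ℝ}
    (hH : ContinuousOn H (Icc c T)) (ht : t ∈ Ioo c T) :
    HasDerivAt (fun r => ∫ s in c..r, (r - s) • H s) (∫ s in c..t, H s) t := by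
  have hsH : ContinuousOn (fun s => s • H s) (Icc c T) := continuousOn_id.smul hH
  have hsplit : ∀ r ∈ Icc c T,
      ∫ s in c..r, (r - s) • H s = r • (∫ s in c..r, H s) - ∫ s in c..r, s • H s := by
    intro r hr
    have hint : ∀ {G : ℝ → E}, ContinuousOn G (Icc c T) → IntervalIntegrable G volume c r :=
      fun hG => (hG.mono (Icc_subset_Icc_right hr.2)).intervalIntegrable_of_Icc hr.1
    rw [← intervalIntegral.integral_smul, ← intervalIntegral.integral_sub
      ((hint hH).continuousOn_smul (continuousOn_const (c := r))) (hint hsH)]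
    simp only [sub_smul]
  have hderiv := ((hasDerivAt_id t).smul (hasDerivAt_intervalIntegral_of_continuousOn hH ht)).sub
    (hasDerivAt_intervalIntegral_of_continuousOn hsH ht)
  simp only [id, one_smul, add_sub_cancel_left] at hderiv
  exact hderiv.congr_of_eventuallyEq
    (Filter.eventuallyEq_of_mem (Icc_mem_nhds ht.1 ht.2) hsplit)

end Volterra

theorem IsWaveSolution.exists_hasDerivAt {N : ℕ} {Δ : Matrix (Fin N) (Fin N) ℝ} {T c : ℝ}
    {lam : ℝ → ℝ} {S a b : Fin N → ℝ} {X : ℝ → Fin N → ℝ}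
    (hX : IsWaveSolution Δ T lam S a b X) (hlam : IntervalIntegrable lam volume 0 T)
    (hc : 0 ≤ c) (hvan : ∀ᵐ t ∂(volume.restrict (Ioo c T)), lam t = 0) :
    ∃ X' : ℝ → Fin N → ℝ, ∀ t ∈ Ioo c T,
      HasDerivAt X (X' t) t ∧ HasDerivAt X' (Δ *ᵥ X t) t := by
  obtain ⟨hXc, hXeq⟩ := hX
  set F : ℝ → Fin N → ℝ := fun s => Δ *ᵥ X s + lam s • S
  have hΔX : ContinuousOn (fun s => Δ *ᵥ X s) (Icc 0 T) :=
    Δ.mulVecLin.continuous_of_finiteDimensional.comp_continuousOn hXc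
  have hF : ∀ {x y}, 0 ≤ x → x ≤ y → y ≤ T → IntervalIntegrable F volume x y :=
    fun h0x hxy hyT =>
    ((hΔX.mono (Icc_subset_Icc h0x hyT)).intervalIntegrable_of_Icc hxy).add
      ((hlam.mono_set (uIcc_subset_uIcc (mem_uIcc_of_le h0x (hxy.trans hyT))
        (mem_uIcc_of_le (h0x.trans hxy) hyT))).smul_continuousOn (continuousOn_const (c := S)))
  have hvan' : ∀ᵐ s, s ∈ Ioc c T → lam s = 0 := by
    rw [Measure.restrict_congr_set Ioo_ae_eq_Ioc] at hvan
    exact (ae_restrict_iff' measurableSet_Ioc).1 hvan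
  have hXc' : ∀ t ∈ Icc c T, X t = a + t • b + (∫ s in (0:ℝ)..c, (c - s) • F s) +
      (t - c) • (∫ s in (0:ℝ)..c, F s) + ∫ s in c..t, (t - s) • (Δ *ᵥ X s) := by
    rintro t ⟨hct, htT⟩
    rw [hXeq t ⟨hc.trans hct, htT⟩,
      integral_sub_smul_add_adjacent_intervals (hF le_rfl hc (hct.trans htT)) (hF hc hct htT)]
    have hsource : ∫ s in c..t, (t - s) • F s = ∫ s in c..t, (t - s) • (Δ *ᵥ X s) := by
      refine intervalIntegral.integral_congr_ae ?_
      filter_upwards [hvan'] with s hs hst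
      rw [uIoc_of_le hct] at hst
      simp only [F, hs ⟨hst.1, hst.2.trans htT⟩, zero_smul, add_zero]
    rw [hsource]
    simp only [add_assoc]
  refine ⟨fun t => b + (∫ s in (0:ℝ)..c, F s) + ∫ s in c..t, Δ *ᵥ X s, fun t ht => ⟨?_, ?_⟩⟩
  · have hrhs := ((((hasDerivAt_id t).smul_const b).const_add a).add_const
      (∫ s in (0:ℝ)..c, (c - s) • F s)).add
      (((hasDerivAt_id t).sub_const c).smul_const (∫ s in (0:ℝ)..c, F s)) |>.add
      (hasDerivAt_intervalIntegral_sub_smul (hΔX.mono (Icc_subset_Icc_left hc)) ht)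
    simp only [id, one_smul] at hrhs
    exact (hrhs.congr_of_eventuallyEq
      (Filter.eventuallyEq_of_mem (Icc_mem_nhds ht.1 ht.2) hXc')).congr_deriv
      (by simp only [add_assoc])
  · exact (hasDerivAt_intervalIntegral_of_continuousOn (hΔX.mono (Icc_subset_Icc_left hc))
      ht).const_add _

theorem IsOpen.eq_zero_of_hasDerivAt_of_eq_zero {F : Type*} [NormedAddCommGroup F]
    [NormedSpace ℝ F] {U : Set ℝ} (hU : IsOpen U) {f f' : ℝ → F}
    (hf : ∀ t ∈ U, HasDerivAt f (f' t) t)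
    (h0 : ∀ t ∈ U, f t = 0) : ∀ t ∈ U, f' t = 0 := fun t ht =>
  (hf t ht).unique <| (hasDerivAt_const t 0).congr_of_eventuallyEq
    (Filter.eventuallyEq_of_mem (hU.mem_nhds ht) h0)

section Spectral

variable {N : ℕ}

theorem HasDerivAt.mulVec_apply (M : Matrix (Fin N) (Fin N) ℝ) {Y : ℝ → Fin N → ℝ}
    {y' : Fin N → ℝ} {t : ℝ} (hY : HasDerivAt Y y' t) (k : Fin N) :
    HasDerivAt (fun r => (M *ᵥ Y r) k) ((M *ᵥ y') k) t :=
  hasDerivAt_pi.1 (M.mulVecLin.toContinuousLinearMap.hasFDerivAt.comp_hasDerivAt t hY) k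

theorem pow_mulVec_apply_eq_zero_of_hasDerivAt {Δ : Matrix (Fin N) (Fin N) ℝ} {U : Set ℝ}
    (hU : IsOpen U) {Y Y' : ℝ → Fin N → ℝ} (hY : ∀ t ∈ U, HasDerivAt Y (Y' t) t)
    (hY' : ∀ t ∈ U, HasDerivAt Y' (Δ *ᵥ Y t) t) {k : Fin N} (h0 : ∀ t ∈ U, Y t k = 0) (j : ℕ) :
    ∀ t ∈ U, (Δ ^ j *ᵥ Y t) k = 0 := by
  induction j with
  | zero => simpa using h0
  | succ j ih =>
    have hvel := hU.eq_zero_of_hasDerivAt_of_eq_zero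
      (fun t ht => (hY t ht).mulVec_apply (Δ ^ j) k) ih
    have hacc := hU.eq_zero_of_hasDerivAt_of_eq_zero
      (fun t ht => (hY' t ht).mulVec_apply (Δ ^ j) k) hvel
    simpa only [mulVec_mulVec, ← pow_succ] using hacc

variable {v : Fin N → Fin N → ℝ} (horth : ∀ n m, v n ⬝ᵥ v m = if n = m then 1 else 0)
include horth

theorem sum_dotProduct_smul_of_orthonormal (x : Fin N → ℝ) : ∑ m, (x ⬝ᵥ v m) • v m = x := by
  set V : Matrix (Fin N) (Fin N) ℝ := Matrix.of v
  have hVVt : V * Vᵀ = 1 := by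
    ext n m
    simpa [Matrix.mul_apply, Matrix.one_apply, dotProduct, V] using horth n m
  calc ∑ m, (x ⬝ᵥ v m) • v m = Vᵀ *ᵥ (V *ᵥ x) := by
        ext k
        simp [mulVec, dotProduct, V, Finset.sum_apply, mul_comm]
    _ = x := by rw [mulVec_mulVec, mul_eq_one_comm.mp hVVt, one_mulVec]

theorem pow_mulVec_eq_sum_of_orthonormal {Δ : Matrix (Fin N) (Fin N) ℝ} {μ : Fin N → ℝ}
    (heig : ∀ m, Δ *ᵥ v m = μ m • v m) (j : ℕ) (x : Fin N → ℝ) :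
    Δ ^ j *ᵥ x = ∑ m, (μ m ^ j * (x ⬝ᵥ v m)) • v m := by
  have hpow : ∀ m, Δ ^ j *ᵥ v m = μ m ^ j • v m := fun m => by
    induction j with
    | zero => simp
    | succ j ih => rw [pow_succ', ← mulVec_mulVec, ih, mulVec_smul, heig, smul_smul, pow_succ]
  conv_lhs => rw [← sum_dotProduct_smul_of_orthonormal horth x]
  simp only [mulVec_sum, mulVec_smul, hpow, smul_smul, mul_comm]

theorem eq_zero_of_forall_pow_mulVec_apply_eq_zero {Δ : Matrix (Fin N) (Fin N) ℝ}
    {μ : Fin N → ℝ} (heig : ∀ m, Δ *ᵥ v m = μ m • v m) (hμ : Function.Injective μ)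
    {K : Finset (Fin N)} (hK : ∀ n, ∃ k ∈ K, v n k ≠ 0) {x : Fin N → ℝ}
    (hx : ∀ k ∈ K, ∀ j : ℕ, (Δ ^ j *ᵥ x) k = 0) : x = 0 := by
  suffices hcoord : ∀ n, x ⬝ᵥ v n = 0 by
    rw [← sum_dotProduct_smul_of_orthonormal horth x]
    simp [hcoord]
  intro n
  obtain ⟨k, hk, hnk⟩ := hK n
  have hvdm : (fun m => v m k * (x ⬝ᵥ v m)) = 0 := by
    refine eq_zero_of_forall_pow_sum_mul_pow_eq_zero hμ fun i => ?_
    rw [← hx k hk i, pow_mulVec_eq_sum_of_orthonormal horth heig]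
    simp only [Finset.sum_apply, Pi.smul_apply, smul_eq_mul]
    exact Finset.sum_congr rfl fun m _ => by ring
  exact (mul_eq_zero.1 (congrFun hvdm n)).resolve_left hnk

end Spectral

/-- **Theorem 4.1.** Records on a strategic set of nodes determine the final state `X(T)`:
if two solutions driven by admissible sources with the same initial data agree on every node of
a strategic set for all `t ∈ (0,T)`, then their final states at `T` coincide. -/
theorem final_state_uniqueness
    {N : ℕ} (hN : 2 ≤ N)
    (Δ : Matrix (Fin N) (Fin N) ℝ)
    (ω : Fin N → ℝ) (v : Fin N → Fin N → ℝ)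
    (hω0 : ω ⟨0, by omega⟩ = 0) (hωmono : StrictMono ω)
    (horth : ∀ n m : Fin N, v n ⬝ᵥ v m = if n = m then 1 else 0)
    (heig : ∀ n : Fin N, Δ.mulVec (v n) = (-(ω n) ^ 2) • v n)
    (T : ℝ)
    (a b : Fin N → ℝ)
    (lam₁ lam₂ : ℝ → ℝ) (S₁ S₂ : Fin N → ℝ)
    (hadm₁ : AdmissiblePair N T lam₁ S₁) (hadm₂ : AdmissiblePair N T lam₂ S₂)
    (X₁ X₂ : ℝ → Fin N → ℝ)
    (hX₁ : IsWaveSolution Δ T lam₁ S₁ a b X₁) (hX₂ : IsWaveSolution Δ T lam₂ S₂ a b X₂)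
    (K : Finset (Fin N)) (hstrat : ∀ n : Fin N, ∃ k ∈ K, v n k ≠ 0)
    (hagree : ∀ k ∈ K, ∀ t ∈ Ioo (0:ℝ) T, X₁ t k = X₂ t k) :
    X₁ T = X₂ T := by
  obtain ⟨hL₁, ⟨T₁, hT₁, hvan₁⟩, -⟩ := hadm₁
  obtain ⟨hL₂, ⟨T₂, hT₂, hvan₂⟩, -⟩ := hadm₂
  set c := max T₁ T₂
  have hc : 0 ≤ c := le_max_of_le_left hT₁.1.le
  have hcT : c < T := max_lt hT₁.2 hT₂.2
  have hint : ∀ {lam : ℝ → ℝ}, MemLp lam 2 (volume.restrict (Ioo 0 T)) →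
      IntervalIntegrable lam volume 0 T := fun hL =>
    (intervalIntegrable_iff_integrableOn_Ioo_of_le (hc.trans hcT.le)).2 (hL.integrable one_le_two)
  obtain ⟨X₁', hX₁'⟩ := hX₁.exists_hasDerivAt (hint hL₁) hc
    (ae_restrict_of_ae_restrict_of_subset (Ioo_subset_Ioo_left (le_max_left _ _)) hvan₁)
  obtain ⟨X₂', hX₂'⟩ := hX₂.exists_hasDerivAt (hint hL₂) hc
    (ae_restrict_of_ae_restrict_of_subset (Ioo_subset_Ioo_left (le_max_right _ _)) hvan₂)
  have hω : ∀ m, 0 ≤ ω m := fun m => hω0 ▸ hωmono.monotone (Nat.zero_le m)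
  have hμ : Function.Injective fun m => -(ω m) ^ 2 := fun m₁ m₂ h =>
    hωmono.injective <| (sq_eq_sq₀ (hω m₁) (hω m₂)).1 (neg_inj.1 h)
  have hdiff : ∀ t ∈ Ioo c T, X₁ t - X₂ t = 0 := fun t ht =>
    eq_zero_of_forall_pow_mulVec_apply_eq_zero horth heig hμ hstrat fun k hk j =>
      pow_mulVec_apply_eq_zero_of_hasDerivAt isOpen_Ioo
        (fun s hs => (hX₁' s hs).1.sub (hX₂' s hs).1)
        (fun s hs => mulVec_sub Δ (X₁ s) (X₂ s) ▸ (hX₁' s hs).2.sub (hX₂' s hs).2)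
        (fun s hs => sub_eq_zero.2 (hagree k hk s ⟨hc.trans_lt hs.1, hs.2⟩)) j t ht
  have hEqOn : EqOn X₁ X₂ (Icc c T) :=
    EqOn.of_subset_closure (fun t ht => sub_eq_zero.1 (hdiff t ht))
      (hX₁.1.mono (Icc_subset_Icc_left hc)) (hX₂.1.mono (Icc_subset_Icc_left hc))
      Ioo_subset_Icc_self (closure_Ioo hcT.ne).ge
  exact hEqOn (right_mem_Icc.2 hcT.le)
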